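/- arXiv:1510.09115 — 8 statements merged into one kernel-verified Lean document; each statement's English description precedes it below -/
import Mathlib

section
/- For real numbers a, b with 0 ≤ a ≤ π and 0 ≤ b ≤ π: if a + b ≤ π then cos(a) + cos(b) ≥ 1 + cos(a+b), and if a + b ≥ π then cos(a) + cos(b) ≥ 2·cos((a+b)/2). -/
theorem cos_sum_cases (a b : ℝ) (ha0 : 0 ≤ a) (ha : a ≤ Real.pi)
    (hb0 : 0 ≤ b) (hb : b ≤ Real.pi) :
    (a + b ≤ Real.pi → Real.cos a + Real.cos b ≥ 1 + Real.cos (a + b)) ∧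
    (Real.pi ≤ a + b → Real.cos a + Real.cos b ≥ 2 * Real.cos ((a + b) / 2)) := by
  have hsum : Real.cos a + Real.cos b
      = 2 * Real.cos ((a + b) / 2) * Real.cos ((a - b) / 2) := Real.cos_add_cos a b
  set s := (a + b) / 2 with hs
  set d := (a - b) / 2 with hd
  constructor
  · intro h
    have hs2 : s ≤ Real.pi / 2 := by rw [hs]; linarith
    have hs0 : 0 ≤ s := by rw [hs]; linarith
    have hds : |d| ≤ s := by
      rw [abs_le]; constructor <;> [skip; skip] <;> (rw [hd, hs]; linarith)
    have hcs0 : 0 ≤ Real.cos s := Real.cos_nonneg_of_mem_Icc ⟨by linarith, hs2⟩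
    have hcds : Real.cos s ≤ Real.cos d := by
      rw [← Real.cos_abs d]
      exact Real.cos_le_cos_of_nonneg_of_le_pi (abs_nonneg d) (by linarith [Real.pi_gt_three]) hds
    have hsq : 1 + Real.cos (a + b) = 2 * Real.cos s ^ 2 := by
      have h1 := Real.cos_sq s
      have h2 : 2 * s = a + b := by rw [hs]; ring
      rw [h2] at h1; linarith
    rw [hsum, hsq]
    nlinarith
  · intro h
    have hs0 : Real.pi / 2 ≤ s := by rw [hs]; linarith
    have hcs0 : Real.cos s ≤ 0 := Real.cos_nonpos_of_pi_div_two_le_of_le hs0 (by rw [hs]; linarith)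
    have hcd1 : Real.cos d ≤ 1 := Real.cos_le_one d
    rw [hsum]
    nlinarith
end

section
/- Let n ≥ 2 and let x₁,…,xₙ be real numbers with 0 ≤ xᵢ ≤ π for all i and Σ xᵢ = (n−2)π. Then Σ cos(xᵢ) ≥ min(1 + (n−1)·cos((n−2)π/(n−1)), n·cos((n−2)π/n)). -/
/-!
Pass to the exterior angles `y i = π - x i ∈ [0, π]`, which sum to `2π`; the claim becomes
`∑ cos (y i) ≤ max ((n - 1) cos (π / (n - 1)) - 1) (n cos (2π / n))`.

If two exterior angles satisfy `π ≤ y a + y b`, then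
`cos (y a) + cos (y b) ≤ -1 + cos (y a + y b - π)`, and merging them into the single angle
`y a + y b - π` leaves `n - 1` nonnegative angles of total `π`, whose cosines sum to at most
`(n - 1) cos (π / (n - 1))`. Otherwise all pairwise sums are below `π`, and the cosines sum to
at most `n cos (2π / n)`.

Both bounds are Jensen's inequality for `cos` on `[-π/2, π/2]` when no angle exceeds `π/2`. At
most one angle can exceed `π/2`; it is handled by a one-variable monotonicity argument after
applying Jensen to the remaining angles.
-/

open Real Set Finset

theorem sin_le_sin_of_le_of_le_pi_sub {a b : ℝ} (ha : -(π / 2) ≤ a) (hab : a ≤ b)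
    (hb : b ≤ π - a) : sin a ≤ sin b := by
  have hsub : 0 ≤ sin ((b - a) / 2) :=
    sin_nonneg_of_nonneg_of_le_pi (by linarith) (by linarith)
  have hmid : 0 ≤ cos ((b + a) / 2) := cos_nonneg_of_mem_Icc ⟨by linarith, by linarith⟩
  nlinarith [sin_sub_sin b a, mul_nonneg hsub hmid]

theorem cos_add_cos_add_one_add_cos_add (a b : ℝ) :
    cos a + cos b + 1 + cos (a + b) = 4 * cos (a / 2) * cos (b / 2) * cos ((a + b) / 2) := by
  obtain ⟨p, rfl⟩ : ∃ p, a = 2 * p := ⟨a / 2, by ring⟩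
  obtain ⟨q, rfl⟩ : ∃ q, b = 2 * q := ⟨b / 2, by ring⟩
  rw [show 2 * p + 2 * q = 2 * (p + q) by ring, show 2 * (p + q) / 2 = p + q by ring,
    mul_div_cancel_left₀ p two_ne_zero, mul_div_cancel_left₀ q two_ne_zero]
  simp only [cos_two_mul, cos_add]
  linear_combination 2 * sin q ^ 2 * sin_sq_add_cos_sq p + (2 - 2 * cos p ^ 2) * sin_sq_add_cos_sq q

theorem cos_add_cos_le_neg_one_sub_cos_add {a b : ℝ} (ha : a ≤ π) (hb : b ≤ π)
    (hab : π ≤ a + b) : cos a + cos b ≤ -1 - cos (a + b) := by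
  have hca : 0 ≤ cos (a / 2) := cos_nonneg_of_mem_Icc ⟨by linarith, by linarith⟩
  have hcb : 0 ≤ cos (b / 2) := cos_nonneg_of_mem_Icc ⟨by linarith, by linarith⟩
  have hcab : cos ((a + b) / 2) ≤ 0 :=
    cos_nonpos_of_pi_div_two_le_of_le (by linarith) (by linarith)
  nlinarith [cos_add_cos_add_one_add_cos_add a b, mul_nonneg hca hcb]

theorem sum_cos_le_card_mul_cos_sum_div_card {ι : Type*} {s : Finset ι} {u : ι → ℝ}
    (hu : ∀ i ∈ s, u i ∈ Icc (-(π / 2)) (π / 2)) :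
    ∑ i ∈ s, cos (u i) ≤ #s * cos ((∑ i ∈ s, u i) / #s) := by
  rcases s.eq_empty_or_nonempty with rfl | hs
  · simp
  have hcard : (0 : ℝ) < #s := by exact_mod_cast hs.card_pos
  have := strictConcaveOn_cos_Icc.concaveOn.le_map_sum (t := s) (w := fun _ => (#s : ℝ)⁻¹)
    (p := u) (fun _ _ => by positivity) (by simp [hcard.ne']) hu
  simp only [smul_eq_mul, ← mul_sum] at this
  rw [div_eq_inv_mul]
  calc ∑ i ∈ s, cos (u i) = #s * ((#s : ℝ)⁻¹ * ∑ i ∈ s, cos (u i)) := by field_simp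
    _ ≤ _ := by gcongr

theorem mul_cos_div_sub_cos_le {m ρ : ℝ} (hm : 1 ≤ m) (hρ0 : 0 ≤ ρ)
    (hρ : ρ ≤ m * π / (m + 1)) : m * cos (ρ / m) - cos ρ ≤ (m + 1) * cos (π / (m + 1)) := by
  let f x := m * cos (x / m) - cos x
  have hf (x : ℝ) : HasDerivAt f (sin x - sin (x / m)) x :=
    ((((hasDerivAt_id x).div_const m).cos.const_mul m).sub (hasDerivAt_cos x)).congr_deriv
      (by simp only [id]; field_simp; ring)
  have hmono : MonotoneOn f (Icc 0 (m * π / (m + 1))) := by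
    refine monotoneOn_of_hasDerivWithinAt_nonneg (convex_Icc _ _)
      (fun x _ => (hf x).continuousAt.continuousWithinAt)
      (fun x _ => (hf x).hasDerivWithinAt) fun x hx => ?_
    rw [interior_Icc] at hx
    have hx' : x * (m + 1) ≤ m * π := by
      have := hx.2.le; rwa [le_div_iff₀ (by positivity)] at this
    rw [sub_nonneg]
    apply sin_le_sin_of_le_of_le_pi_sub
    · have : 0 ≤ x / m := div_nonneg hx.1.le (by linarith)
      linarith [pi_pos]
    · rw [div_le_iff₀ (by positivity)]; nlinarith [hx.1]
    · have : x / m ≤ π - x := by rw [div_le_iff₀ (by positivity)]; linarith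
      linarith
  have hpeak : f (m * π / (m + 1)) = (m + 1) * cos (π / (m + 1)) := by
    have e1 : m * π / (m + 1) / m = π / (m + 1) := by field_simp
    have e2 : m * π / (m + 1) = π - π / (m + 1) := by field_simp; ring
    simp only [f, e1]
    rw [e2, cos_pi_sub]
    ring
  exact hpeak ▸ hmono ⟨hρ0, hρ⟩ ⟨by positivity, le_rfl⟩ hρ

theorem mul_cos_three_pi_div_two_mul_le {m : ℝ} (hm : 3 ≤ m) :
    m * cos (3 * π / (2 * m)) ≤ (m + 1) * cos (2 * π / (m + 1)) := by
  have hconc : (1 / (m + 1)) • cos (π / 2) + (m / (m + 1)) • cos (3 * π / (2 * m)) ≤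
      cos ((1 / (m + 1)) • (π / 2) + (m / (m + 1)) • (3 * π / (2 * m))) :=
    strictConcaveOn_cos_Icc.concaveOn.2 ⟨by linarith [pi_pos], le_rfl⟩
    ⟨by have : 0 ≤ 3 * π / (2 * m) := by positivity
        linarith [pi_pos],
     by rw [div_le_div_iff₀ (by positivity) two_pos]; nlinarith [pi_pos]⟩
    (by positivity) (by positivity) (by field_simp; ring)
  have e : 1 / (m + 1) * (π / 2) + m / (m + 1) * (3 * π / (2 * m)) = 2 * π / (m + 1) := by
    field_simp; ring
  simp only [smul_eq_mul, cos_pi_div_two, mul_zero, zero_add, e] at hconc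
  calc m * cos (3 * π / (2 * m)) = (m + 1) * (m / (m + 1) * cos (3 * π / (2 * m))) := by
        field_simp
    _ ≤ _ := by gcongr

theorem cos_add_mul_cos_two_pi_sub_div_le {m t : ℝ} (ht : π / 2 ≤ t) (htπ : t ≤ π)
    (hm : 2 * π - t ≤ m * (π - t)) :
    cos t + m * cos ((2 * π - t) / m) ≤ (m + 1) * cos (2 * π / (m + 1)) := by
  have htπ' : t < π := htπ.lt_of_ne (by rintro rfl; nlinarith [pi_pos])
  have hm3 : 3 ≤ m := by nlinarith
  let g x := cos x + m * cos ((2 * π - x) / m)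
  have hg (x : ℝ) : HasDerivAt g (sin ((2 * π - x) / m) - sin x) x :=
    ((hasDerivAt_cos x).add ((((hasDerivAt_id x).const_sub (2 * π)).div_const m).cos.const_mul
      m)).congr_deriv (by simp only [id]; field_simp; ring)
  have hanti : AntitoneOn g (Icc (π / 2) t) := by
    refine antitoneOn_of_hasDerivWithinAt_nonpos (convex_Icc _ _)
      (fun x _ => (hg x).continuousAt.continuousWithinAt)
      (fun x _ => (hg x).hasDerivWithinAt) fun x hx => ?_
    rw [interior_Icc] at hx
    obtain ⟨hx1, hx2⟩ := hx
    rw [sub_nonpos]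
    apply sin_le_sin_of_le_of_le_pi_sub
    · have : 0 ≤ (2 * π - x) / m := div_nonneg (by linarith) (by linarith)
      linarith [pi_pos]
    · rw [div_le_iff₀ (by positivity)]; nlinarith
    · have : (2 * π - x) / m ≤ π - x := by rw [div_le_iff₀ (by positivity)]; nlinarith
      linarith
  have hstart : g (π / 2) = m * cos (3 * π / (2 * m)) := by
    simp only [g, cos_pi_div_two, zero_add]
    congr 2
    ring
  calc g t ≤ g (π / 2) := hanti ⟨le_rfl, ht⟩ ⟨ht, le_rfl⟩ ht
    _ = m * cos (3 * π / (2 * m)) := hstart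
    _ ≤ _ := mul_cos_three_pi_div_two_mul_le hm3

section

variable {ι : Type*} [DecidableEq ι] {s : Finset ι}

theorem sum_cos_le_of_sum_eq_pi {u : ι → ℝ} (hu : ∀ i ∈ s, 0 ≤ u i)
    (hsum : ∑ i ∈ s, u i = π) : ∑ i ∈ s, cos (u i) ≤ #s * cos (π / #s) := by
  by_cases hbig : ∃ j ∈ s, π / 2 < u j
  · obtain ⟨j, hj, hbig⟩ := hbig
    set ρ := ∑ i ∈ s.erase j, u i
    have hρ : u j + ρ = π := by rw [add_sum_erase _ _ hj, hsum]
    have hle (i) (hi : i ∈ s.erase j) : u i ≤ ρ :=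
      single_le_sum (fun k hk => hu k (mem_of_mem_erase hk)) hi
    have hcard : (#s : ℝ) = #(s.erase j) + 1 := by exact_mod_cast (card_erase_add_one hj).symm
    rw [← add_sum_erase _ _ hj, hcard, show u j = π - ρ by linarith, cos_pi_sub]
    rcases (s.erase j).eq_empty_or_nonempty with he | hne
    · simp [ρ, he]
    have hm : (1 : ℝ) ≤ #(s.erase j) := by exact_mod_cast hne.card_pos
    have hρpeak : ρ ≤ #(s.erase j) * π / (#(s.erase j) + 1) := by
      rw [le_div_iff₀ (by positivity)]; nlinarith [pi_pos]
    have hjensen := sum_cos_le_card_mul_cos_sum_div_card (s := s.erase j) (u := u)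
      fun i hi => ⟨by linarith [hu i (mem_of_mem_erase hi), pi_pos], by linarith [hle i hi]⟩
    linarith [mul_cos_div_sub_cos_le hm (sum_nonneg fun i hi => hu i (mem_of_mem_erase hi))
      hρpeak]
  · push Not at hbig
    simpa [hsum] using sum_cos_le_card_mul_cos_sum_div_card (s := s) (u := u)
      fun i hi => ⟨by linarith [hu i hi, pi_pos], hbig i hi⟩

theorem sum_cos_le_of_pi_le_add {y : ι → ℝ} {a b : ι} (ha : a ∈ s) (hb : b ∈ s) (hab : a ≠ b)
    (hy0 : ∀ i ∈ s, 0 ≤ y i) (hya : y a ≤ π) (hyb : y b ≤ π) (hpi : π ≤ y a + y b)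
    (hsum : ∑ i ∈ s, y i = 2 * π) :
    ∑ i ∈ s, cos (y i) ≤ (#s - 1) * cos (π / (#s - 1)) - 1 := by
  set r := (s.erase b).erase a
  have ha' : a ∈ s.erase b := mem_erase.2 ⟨hab, ha⟩
  have hsplit (f : ι → ℝ) : ∑ i ∈ s, f i = f b + (f a + ∑ i ∈ r, f i) := by
    rw [add_sum_erase _ _ ha', add_sum_erase _ _ hb]
  -- merge the angles at `a` and `b` into the single angle `v` at `a`; the total drops to `π`
  set v := y a + y b - π
  have hu (f : ℝ → ℝ) :
      ∑ i ∈ s.erase b, f (Function.update y a v i) = f v + ∑ i ∈ r, f (y i) := by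
    rw [← add_sum_erase _ _ ha', Function.update_self]
    congr 1
    exact sum_congr rfl fun i hi => by rw [Function.update_of_ne (ne_of_mem_erase hi)]
  have hmerged := sum_cos_le_of_sum_eq_pi (s := s.erase b) (u := Function.update y a v)
    (fun i hi => by
      rcases eq_or_ne i a with rfl | hia
      · rw [Function.update_self]; linarith
      · rw [Function.update_of_ne hia]; exact hy0 i (mem_of_mem_erase hi))
    (by have h := hu id; simp only [id] at h; linarith [hsplit y])
  have hcard : (#(s.erase b) : ℝ) = #s - 1 := by
    rw [card_erase_of_mem hb, Nat.cast_sub (card_pos.2 ⟨b, hb⟩), Nat.cast_one]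
  rw [hu cos, hcard, cos_sub_pi] at hmerged
  linarith [hsplit (fun i => cos (y i)), cos_add_cos_le_neg_one_sub_cos_add hya hyb hpi]

theorem sum_cos_le_of_add_lt_pi {y : ι → ℝ} (hy0 : ∀ i ∈ s, 0 ≤ y i) (hyπ : ∀ i ∈ s, y i ≤ π)
    (hpairs : ∀ a ∈ s, ∀ b ∈ s, a ≠ b → y a + y b < π) (hsum : ∑ i ∈ s, y i = 2 * π) :
    ∑ i ∈ s, cos (y i) ≤ #s * cos (2 * π / #s) := by
  by_cases hbig : ∃ j ∈ s, π / 2 < y j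
  · obtain ⟨j, hj, hbig⟩ := hbig
    have hlt (i) (hi : i ∈ s.erase j) : y i < π - y j := by
      linarith [hpairs i (mem_of_mem_erase hi) j hj (ne_of_mem_erase hi)]
    have hrest : ∑ i ∈ s.erase j, y i = 2 * π - y j := by
      rw [← hsum, ← add_sum_erase _ _ hj]; ring
    have hm : 2 * π - y j ≤ #(s.erase j) * (π - y j) := by
      rw [← hrest, ← nsmul_eq_mul]
      exact sum_le_card_nsmul _ _ _ fun i hi => (hlt i hi).le
    have hjensen := sum_cos_le_card_mul_cos_sum_div_card (s := s.erase j) (u := y)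
      fun i hi => ⟨by linarith [hy0 i (mem_of_mem_erase hi), pi_pos], by linarith [hlt i hi]⟩
    have hcard : (#s : ℝ) = #(s.erase j) + 1 := by exact_mod_cast (card_erase_add_one hj).symm
    rw [← add_sum_erase _ _ hj, hcard]
    rw [hrest] at hjensen
    linarith [cos_add_mul_cos_two_pi_sub_div_le hbig.le (hyπ j hj) hm]
  · push Not at hbig
    simpa [hsum] using sum_cos_le_card_mul_cos_sum_div_card (s := s) (u := y)
      fun i hi => ⟨by linarith [hy0 i hi, pi_pos], hbig i hi⟩

theorem sum_cos_le_of_sum_eq_two_pi {y : ι → ℝ} (hy0 : ∀ i ∈ s, 0 ≤ y i)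
    (hyπ : ∀ i ∈ s, y i ≤ π) (hsum : ∑ i ∈ s, y i = 2 * π) :
    ∑ i ∈ s, cos (y i) ≤ max ((#s - 1) * cos (π / (#s - 1)) - 1) (#s * cos (2 * π / #s)) := by
  by_cases h : ∃ a ∈ s, ∃ b ∈ s, a ≠ b ∧ π ≤ y a + y b
  · obtain ⟨a, ha, b, hb, hab, hpi⟩ := h
    exact le_max_of_le_left
      (sum_cos_le_of_pi_le_add ha hb hab hy0 (hyπ a ha) (hyπ b hb) hpi hsum)
  · push Not at h
    exact le_max_of_le_right (sum_cos_le_of_add_lt_pi hy0 hyπ h hsum)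
end

theorem polygon_cos_sum_bound (n : ℕ) (hn : 2 ≤ n) (x : Fin n → ℝ)
    (hx0 : ∀ i, 0 ≤ x i) (hxpi : ∀ i, x i ≤ Real.pi)
    (hsum : ∑ i, x i = (n - 2) * Real.pi) :
    ∑ i, Real.cos (x i) ≥
      min (1 + (n - 1) * Real.cos ((n - 2) * Real.pi / (n - 1)))
        (n * Real.cos ((n - 2) * Real.pi / n)) := by
  have hn' : (2 : ℝ) ≤ n := by exact_mod_cast hn
  have hext := sum_cos_le_of_sum_eq_two_pi (s := univ) (y := fun i => π - x i)
    (fun i _ => by linarith [hxpi i]) (fun i _ => by linarith [hx0 i])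
    (by
      simp only [sum_sub_distrib, hsum, sum_const, card_univ, Fintype.card_fin, nsmul_eq_mul]
      ring)
  have e1 : (n - 2) * π / (n - 1) = π - π / (n - 1) := by
    field_simp [show (n : ℝ) - 1 ≠ 0 by linarith]; ring
  have e2 : (n - 2) * π / n = π - 2 * π / n := by
    field_simp [show (n : ℝ) ≠ 0 by linarith]
  simp only [cos_pi_sub, sum_neg_distrib, card_univ, Fintype.card_fin] at hext
  rw [ge_iff_le, e1, e2, cos_pi_sub, cos_pi_sub, min_le_iff]
  rcases le_max_iff.1 hext with h | h
  · left; linarith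
  · right; linarith
end

section
/- Let n ≥ 2 and let x₁,…,xₙ be real numbers with 0 ≤ xᵢ ≤ π and Σ xᵢ = (n−2)π. If 2 ≤ n ≤ 6, then Σ cos(xᵢ) ≥ 1 + (n−1)·cos((n−2)π/(n−1)). -/
open Real Finset

lemma pairA (a b : ℝ) (ha : 0 ≤ a) (hb : 0 ≤ b) (hab : a + b ≤ π) :
    Real.cos a + Real.cos b ≥ 1 + Real.cos (a + b) := by
  have hπ := Real.pi_pos
  have h1 : Real.cos a + Real.cos b = 2 * Real.cos ((a+b)/2) * Real.cos ((a-b)/2) :=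
    Real.cos_add_cos a b
  have h2 : (1:ℝ) + Real.cos (a+b) = 2 * Real.cos ((a+b)/2) * Real.cos ((a+b)/2) := by
    have h := Real.cos_add_cos 0 (a+b)
    rw [Real.cos_zero] at h
    rw [h]
    have e1 : (0 + (a+b))/2 = (a+b)/2 := by ring
    have e2 : (0 - (a+b))/2 = -((a+b)/2) := by ring
    rw [e1, e2, Real.cos_neg]
  have hS0 : 0 ≤ Real.cos ((a+b)/2) :=
    Real.cos_nonneg_of_mem_Icc ⟨by linarith, by linarith⟩
  have habs : |(a-b)/2| ≤ (a+b)/2 := by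
    rw [abs_le]; constructor <;> linarith
  have hD : Real.cos ((a+b)/2) ≤ Real.cos ((a-b)/2) := by
    rw [← Real.cos_abs ((a-b)/2)]
    exact Real.cos_le_cos_of_nonneg_of_le_pi (abs_nonneg _) (by linarith) habs
  nlinarith

lemma pairE (a b : ℝ) (hS : Real.cos ((a+b)/2) ≤ 0) :
    Real.cos a + Real.cos b ≥ 2 * Real.cos ((a+b)/2) := by
  have h1 : Real.cos a + Real.cos b = 2 * Real.cos ((a+b)/2) * Real.cos ((a-b)/2) :=
    Real.cos_add_cos a b
  nlinarith [Real.cos_le_one ((a-b)/2)]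

lemma mul_cos_le_sin {v : ℝ} (h0 : 0 ≤ v) (h2 : v ≤ π/2) : v * Real.cos v ≤ Real.sin v := by
  rcases lt_or_eq_of_le h2 with h | h
  · rcases eq_or_lt_of_le h0 with h0' | h0'
    · rw [← h0']; simp
    · have ht := Real.lt_tan h0' h
      have hc : 0 < Real.cos v := Real.cos_pos_of_mem_Ioo ⟨by linarith [Real.pi_pos], h⟩
      rw [Real.tan_eq_sin_div_cos] at ht
      have : v * Real.cos v < (Real.sin v / Real.cos v) * Real.cos v := by
        exact mul_lt_mul_of_pos_right ht hc
      rw [div_mul_cancel₀ _ (ne_of_gt hc)] at this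
      linarith
  · subst h; simp

lemma tangent_line {θ y : ℝ} (hθ1 : π/2 ≤ θ) (hθ2 : θ ≤ π) (hy1 : π/2 ≤ y) (hy2 : y ≤ π) :
    Real.cos θ - Real.sin θ * (y - θ) ≤ Real.cos y := by
  have hπ := Real.pi_pos
  have hcθ : Real.cos θ ≤ 0 := Real.cos_nonpos_of_pi_div_two_le_of_le hθ1 (by linarith)
  have hsθ : 0 ≤ Real.sin θ := Real.sin_nonneg_of_nonneg_of_le_pi (by linarith) hθ2
  rcases le_total θ y with h | h
  · have hd : 0 ≤ y - θ := by linarith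
    have e : Real.cos y = Real.cos θ * Real.cos (y - θ) - Real.sin θ * Real.sin (y - θ) := by
      have h := Real.cos_add θ (y - θ)
      rw [add_sub_cancel] at h
      exact h
    have t1 : 0 ≤ (-Real.cos θ) * (1 - Real.cos (y - θ)) :=
      mul_nonneg (by linarith) (by linarith [Real.cos_le_one (y - θ)])
    have t2 : 0 ≤ Real.sin θ * ((y - θ) - Real.sin (y - θ)) :=
      mul_nonneg hsθ (by linarith [Real.sin_le hd])
    nlinarith
  · have hv0 : 0 ≤ θ - y := by linarith
    have hvw : θ - y ≤ θ - π/2 := by linarith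
    have hw0 : 0 ≤ θ - π/2 := by linarith
    have hw2 : θ - π/2 ≤ π/2 := by linarith
    have hsw : Real.sin (θ - π/2) = -Real.cos θ := by rw [Real.sin_sub]; simp
    have hcw : Real.cos (θ - π/2) = Real.sin θ := by rw [Real.cos_sub]; simp
    have e : Real.cos y = Real.cos θ * Real.cos (θ - y) + Real.sin θ * Real.sin (θ - y) := by
      have h2 := Real.cos_sub θ (θ - y)
      rw [show θ - (θ - y) = y by ring] at h2
      exact h2
    have m1 : Real.sin (θ - y) ≤ Real.sin (θ - π/2) := by
      apply Real.strictMonoOn_sin.monotoneOn ?_ ?_ hvw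
      · exact Set.mem_Icc.2 ⟨by linarith, by linarith⟩
      · exact Set.mem_Icc.2 ⟨by linarith, hw2⟩
    have m2 : Real.cos (θ - π/2) ≤ Real.cos (θ - y) :=
      Real.cos_le_cos_of_nonneg_of_le_pi hv0 (by linarith) hvw
    have m3 : (θ - y) * Real.cos (θ - y) ≤ Real.sin (θ - y) := mul_cos_le_sin hv0 (by linarith)
    have m4 : Real.sin (θ - y) ≤ θ - y := Real.sin_le hv0
    have c2 : Real.cos (θ - y) * ((θ - y) - Real.sin (θ - y))
        ≤ Real.sin (θ - y) * (1 - Real.cos (θ - y)) := by nlinarith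
    have c1 : Real.cos (θ - π/2) * ((θ - y) - Real.sin (θ - y))
        ≤ Real.cos (θ - y) * ((θ - y) - Real.sin (θ - y)) :=
      mul_le_mul_of_nonneg_right m2 (by linarith)
    have c3 : Real.sin (θ - y) * (1 - Real.cos (θ - y))
        ≤ Real.sin (θ - π/2) * (1 - Real.cos (θ - y)) :=
      mul_le_mul_of_nonneg_right m1 (by linarith [Real.cos_le_one (θ - y)])
    rw [hcw] at c1
    rw [hsw] at c3
    nlinarith [c1, c2, c3, e]

/-- Jensen-type bound: if all pairwise sums exceed π and the mean ρ lies in [π/2,π],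
then the sum of cosines is at least card * cos ρ. -/
lemma lemR {ι : Type*} [DecidableEq ι] (s : Finset ι) (f : ι → ℝ) (ρ : ℝ)
    (hρ1 : π/2 ≤ ρ) (hρ2 : ρ ≤ π)
    (hb : ∀ i ∈ s, f i ≤ π)
    (hpair : ∀ i ∈ s, ∀ j ∈ s, i ≠ j → π < f i + f j)
    (hcard : 2 ≤ s.card)
    (hsum : ∑ i ∈ s, f i = s.card * ρ) :
    ∑ i ∈ s, Real.cos (f i) ≥ s.card * Real.cos ρ := by
  have hπ := Real.pi_pos
  by_cases hall : ∀ i ∈ s, π/2 ≤ f i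
  · have key : ∀ i ∈ s, Real.cos ρ - Real.sin ρ * (f i - ρ) ≤ Real.cos (f i) :=
      fun i hi => tangent_line hρ1 hρ2 (hall i hi) (hb i hi)
    have h1 : ∑ i ∈ s, (Real.cos ρ - Real.sin ρ * (f i - ρ)) ≤ ∑ i ∈ s, Real.cos (f i) :=
      Finset.sum_le_sum key
    have h2 : ∑ i ∈ s, (Real.cos ρ - Real.sin ρ * (f i - ρ))
        = s.card * Real.cos ρ - Real.sin ρ * ((∑ i ∈ s, f i) - s.card * ρ) := by
      rw [Finset.sum_sub_distrib, Finset.sum_const, nsmul_eq_mul, ← Finset.mul_sum,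
        Finset.sum_sub_distrib, Finset.sum_const, nsmul_eq_mul]
    have hz : Real.sin ρ * ((∑ i ∈ s, f i) - s.card * ρ) = 0 := by rw [hsum]; ring
    linarith
  · push_neg at hall
    obtain ⟨j, hj, hjsmall⟩ := hall
    obtain ⟨i0, hi0, hne⟩ := Finset.exists_mem_ne (s := s) (by omega) j
    have hi0' : i0 ∈ s.erase j := Finset.mem_erase.2 ⟨hne, hi0⟩
    have htcard : ((s.erase j).erase i0).card = s.card - 2 := by
      rw [Finset.card_erase_of_mem hi0', Finset.card_erase_of_mem hj]
      omega
    have hmem : ∀ i ∈ (s.erase j).erase i0, i ∈ s ∧ i ≠ j := by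
      intro i hi
      have h1 := Finset.mem_of_mem_erase hi
      exact ⟨Finset.mem_of_mem_erase h1, Finset.ne_of_mem_erase h1⟩
    have hbig : ∀ i ∈ (s.erase j).erase i0, π/2 ≤ f i := by
      intro i hi
      obtain ⟨his, hij⟩ := hmem i hi
      have := hpair i his j hj hij
      linarith
    have hS1 : π/2 ≤ (f j + f i0)/2 := by
      have := hpair j hj i0 hi0 (Ne.symm hne)
      linarith
    have hS2 : (f j + f i0)/2 ≤ π := by
      have h1 := hb j hj; have h2 := hb i0 hi0
      linarith
    have hE : Real.cos (f j) + Real.cos (f i0) ≥ 2 * Real.cos ((f j + f i0)/2) := by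
      apply pairE
      exact Real.cos_nonpos_of_pi_div_two_le_of_le hS1 (by linarith)
    have hTS : Real.cos ρ - Real.sin ρ * ((f j + f i0)/2 - ρ) ≤ Real.cos ((f j + f i0)/2) :=
      tangent_line hρ1 hρ2 hS1 hS2
    have hTt : ∀ i ∈ (s.erase j).erase i0,
        Real.cos ρ - Real.sin ρ * (f i - ρ) ≤ Real.cos (f i) :=
      fun i hi => tangent_line hρ1 hρ2 (hbig i hi) (hb i ((hmem i hi).1))
    have h1 : ∑ i ∈ (s.erase j).erase i0, (Real.cos ρ - Real.sin ρ * (f i - ρ))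
        ≤ ∑ i ∈ (s.erase j).erase i0, Real.cos (f i) :=
      Finset.sum_le_sum hTt
    have h2 : ∑ i ∈ (s.erase j).erase i0, (Real.cos ρ - Real.sin ρ * (f i - ρ))
        = ((s.erase j).erase i0).card * Real.cos ρ
          - Real.sin ρ * ((∑ i ∈ (s.erase j).erase i0, f i) - ((s.erase j).erase i0).card * ρ) := by
      rw [Finset.sum_sub_distrib, Finset.sum_const, nsmul_eq_mul, ← Finset.mul_sum,
        Finset.sum_sub_distrib, Finset.sum_const, nsmul_eq_mul]
    have d1c : ∑ i ∈ s.erase j, Real.cos (f i) + Real.cos (f j) = ∑ i ∈ s, Real.cos (f i) :=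
      Finset.sum_erase_add s _ hj
    have d2c : ∑ i ∈ (s.erase j).erase i0, Real.cos (f i) + Real.cos (f i0)
        = ∑ i ∈ s.erase j, Real.cos (f i) :=
      Finset.sum_erase_add _ _ hi0'
    have d1f : ∑ i ∈ s.erase j, f i + f j = ∑ i ∈ s, f i := Finset.sum_erase_add s _ hj
    have d2f : ∑ i ∈ (s.erase j).erase i0, f i + f i0 = ∑ i ∈ s.erase j, f i :=
      Finset.sum_erase_add _ _ hi0'
    have hcast : (((s.erase j).erase i0).card : ℝ) = (s.card : ℝ) - 2 := by
      rw [htcard, Nat.cast_sub hcard]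
      norm_num
    have hsum_t : ∑ i ∈ (s.erase j).erase i0, f i = s.card * ρ - (f j + f i0) := by
      linarith [hsum, d1f, d2f]
    have hsρ : 0 ≤ Real.sin ρ :=
      Real.sin_nonneg_of_nonneg_of_le_pi (by linarith) hρ2
    rw [hsum_t, hcast] at h2
    nlinarith [h1, h2, hE, hTS, d1c, d2c, hsρ]

/-- If m angles in [0,π] (1 ≤ m ≤ 5) sum to (m-1)π, then the sum of their cosines
is at least m cos((m-1)π/m). -/
lemma lemQ {ι : Type*} [DecidableEq ι] (s : Finset ι) (f : ι → ℝ)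
    (h0 : ∀ i ∈ s, 0 ≤ f i) (hb : ∀ i ∈ s, f i ≤ π)
    (hm1 : 1 ≤ s.card) (hm5 : s.card ≤ 5)
    (hsum : ∑ i ∈ s, f i = ((s.card : ℝ) - 1) * π) :
    ∑ i ∈ s, Real.cos (f i) ≥ (s.card : ℝ) * Real.cos (((s.card : ℝ) - 1) * π / s.card) := by
  have hπ := Real.pi_pos
  rcases eq_or_lt_of_le hm1 with h1 | h2
  · -- card = 1
    obtain ⟨a, ha⟩ := Finset.card_eq_one.1 h1.symm
    subst ha
    simp only [Finset.sum_singleton, Finset.card_singleton] at hsum ⊢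
    norm_num at hsum ⊢
    rw [hsum]
    simp
  · by_cases hpairs : ∃ i ∈ s, ∃ j ∈ s, i ≠ j ∧ f i + f j ≤ π
    · obtain ⟨i, hi, j, hj, hij, hsumij⟩ := hpairs
      have hj' : j ∈ s.erase i := Finset.mem_erase.2 ⟨hij.symm, hj⟩
      set t := (s.erase i).erase j with htdef
      have htcard : t.card = s.card - 2 := by
        rw [htdef, Finset.card_erase_of_mem hj', Finset.card_erase_of_mem hi]
        omega
      have d1c : ∑ k ∈ s.erase i, Real.cos (f k) + Real.cos (f i) = ∑ k ∈ s, Real.cos (f k) :=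
        Finset.sum_erase_add s _ hi
      have d2c : ∑ k ∈ t, Real.cos (f k) + Real.cos (f j) = ∑ k ∈ s.erase i, Real.cos (f k) := by
        rw [htdef]; exact Finset.sum_erase_add _ _ hj'
      have hA : Real.cos (f i) + Real.cos (f j) ≥ 1 + Real.cos (f i + f j) :=
        pairA _ _ (h0 i hi) (h0 j hj) hsumij
      have hAB : Real.cos (f i) + Real.cos (f j) ≥ 0 := by
        have := Real.neg_one_le_cos (f i + f j); linarith
      have ht : ∑ k ∈ t, Real.cos (f k) ≥ -(t.card : ℝ) := by
        have : ∑ k ∈ t, (-1 : ℝ) ≤ ∑ k ∈ t, Real.cos (f k) :=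
          Finset.sum_le_sum (fun k _ => Real.neg_one_le_cos (f k))
        simp at this
        linarith
    -- total ≥ 0 - (card - 2) = 2 - card
      have htot : ∑ k ∈ s, Real.cos (f k) ≥ 2 - (s.card : ℝ) := by
        have hcast : (t.card : ℝ) = (s.card : ℝ) - 2 := by
          rw [htcard]; push_cast [h2.le, Nat.lt_iff_add_one_le.1 h2]
          have : 2 ≤ s.card := h2
          push_cast [this]; ring
        linarith
      -- numeric: 2 - m ≥ m cos((m-1)π/m) for m ∈ {2,3,4,5}
      have hnum : (s.card : ℝ) * Real.cos (((s.card : ℝ) - 1) * π / s.card) ≤ 2 - (s.card : ℝ) := by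
        have hm2 : 2 ≤ s.card := h2
        generalize hm : s.card = m at hm2 hm5 ⊢
        interval_cases m
        · rw [show ((2:ℕ):ℝ) = (2:ℝ) by norm_num,
            show ((2:ℝ) - 1) * π / 2 = π/2 from by ring, Real.cos_pi_div_two]
          norm_num
        · rw [show ((3:ℕ):ℝ) = (3:ℝ) by norm_num,
            show ((3:ℝ) - 1) * π / 3 = π - π/3 from by ring,
            Real.cos_pi_sub, Real.cos_pi_div_three]
          norm_num
        · rw [show ((4:ℕ):ℝ) = (4:ℝ) by norm_num,
            show ((4:ℝ) - 1) * π / 4 = π - π/4 from by ring,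
            Real.cos_pi_sub, Real.cos_pi_div_four]
          have hq : (1:ℝ) ≤ Real.sqrt 2 := by
            nlinarith [Real.sq_sqrt (by norm_num : (0:ℝ) ≤ 2), Real.sqrt_nonneg 2]
          nlinarith
        · rw [show ((5:ℕ):ℝ) = (5:ℝ) by norm_num,
            show ((5:ℝ) - 1) * π / 5 = π - π/5 from by ring,
            Real.cos_pi_sub, Real.cos_pi_div_five]
          have h5 : (7:ℝ)/5 ≤ Real.sqrt 5 := by
            nlinarith [Real.sq_sqrt (by norm_num : (0:ℝ) ≤ 5), Real.sqrt_nonneg 5]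
          nlinarith
      linarith
    · push_neg at hpairs
      have hm2 : (2:ℝ) ≤ (s.card : ℝ) := by exact_mod_cast h2
      have hρ1 : π/2 ≤ ((s.card:ℝ) - 1) * π / s.card := by
        rw [le_div_iff₀ (by linarith)]
        nlinarith
      have hρ2 : ((s.card:ℝ) - 1) * π / s.card ≤ π := by
        rw [div_le_iff₀ (by linarith)]
        nlinarith
      have hsum' : ∑ i ∈ s, f i = (s.card : ℝ) * (((s.card:ℝ) - 1) * π / s.card) := by
        rw [hsum]
        field_simp
      exact lemR s f _ hρ1 hρ2 hb hpairs h2 hsum'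

theorem polygon_cos_sum_bound_small (n : ℕ) (hn : 2 ≤ n) (hn6 : n ≤ 6) (x : Fin n → ℝ)
    (hx0 : ∀ i, 0 ≤ x i) (hxpi : ∀ i, x i ≤ Real.pi)
    (hsum : ∑ i, x i = (n - 2) * Real.pi) :
    ∑ i, Real.cos (x i) ≥ 1 + (n - 1) * Real.cos ((n - 2) * Real.pi / (n - 1)) := by
  have hπ := Real.pi_pos
  by_cases hpairs : ∃ i : Fin n, ∃ j : Fin n, i ≠ j ∧ x i + x j ≤ π
  · obtain ⟨i, j, hij, hsumij⟩ := hpairs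
    set s' : Finset (Fin n) := Finset.univ.erase j with hs'
    set f' : Fin n → ℝ := Function.update x i (x i + x j) with hf'
    have hi' : i ∈ s' := Finset.mem_erase.2 ⟨hij, Finset.mem_univ i⟩
    have hcard' : s'.card = n - 1 := by
      rw [hs', Finset.card_erase_of_mem (Finset.mem_univ j), Finset.card_univ, Fintype.card_fin]
    have hcastcard : ((s'.card : ℝ)) = (n:ℝ) - 1 := by
      rw [hcard', Nat.cast_sub (by omega : 1 ≤ n)]; norm_num
    have h0' : ∀ k ∈ s', 0 ≤ f' k := by
      intro k _
      rcases eq_or_ne k i with rfl | hki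
      · rw [hf', Function.update_self]; linarith [hx0 k, hx0 j]
      · rw [hf', Function.update_of_ne hki]; exact hx0 k
    have hb' : ∀ k ∈ s', f' k ≤ π := by
      intro k _
      rcases eq_or_ne k i with rfl | hki
      · rw [hf', Function.update_self]; exact hsumij
      · rw [hf', Function.update_of_ne hki]; exact hxpi k
    set t := s'.erase i with ht
    have dti : ∑ k ∈ t, f' k = ∑ k ∈ t, x k :=
      Finset.sum_congr rfl (fun k hk => by
        rw [hf', Function.update_of_ne (Finset.ne_of_mem_erase hk)])
    have dtc : ∑ k ∈ t, Real.cos (f' k) = ∑ k ∈ t, Real.cos (x k) :=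
      Finset.sum_congr rfl (fun k hk => by
        rw [hf', Function.update_of_ne (Finset.ne_of_mem_erase hk)])
    have e1 : ∑ k ∈ t, f' k + f' i = ∑ k ∈ s', f' k := Finset.sum_erase_add _ _ hi'
    have e2 : ∑ k ∈ s', x k + x j = ∑ k, x k := Finset.sum_erase_add _ _ (Finset.mem_univ j)
    have e3 : ∑ k ∈ t, x k + x i = ∑ k ∈ s', x k := Finset.sum_erase_add _ _ hi'
    have e1c : ∑ k ∈ t, Real.cos (f' k) + Real.cos (f' i) = ∑ k ∈ s', Real.cos (f' k) :=
      Finset.sum_erase_add _ _ hi'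
    have e2c : ∑ k ∈ s', Real.cos (x k) + Real.cos (x j) = ∑ k, Real.cos (x k) :=
      Finset.sum_erase_add _ _ (Finset.mem_univ j)
    have e3c : ∑ k ∈ t, Real.cos (x k) + Real.cos (x i) = ∑ k ∈ s', Real.cos (x k) :=
      Finset.sum_erase_add _ _ hi'
    have hfi : f' i = x i + x j := by rw [hf', Function.update_self]
    have hfic : Real.cos (f' i) = Real.cos (x i + x j) := by rw [hfi]
    have hsum' : ∑ k ∈ s', f' k = ((s'.card : ℝ) - 1) * π := by
      rw [hcastcard]
      have hx : ∑ k, x k = ((n:ℝ) - 2) * π := hsum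
      have : ((n:ℝ) - 1 - 1) * π = ((n:ℝ) - 2) * π := by ring
      rw [this]
      linarith [e1, e2, e3, dti, hfi]
    have hQ := lemQ s' f' h0' hb' (by omega) (by omega) hsum'
    rw [hcastcard] at hQ
    have egoal : ((n:ℝ) - 1 - 1) = (n:ℝ) - 2 := by ring
    rw [egoal] at hQ
    have hA := pairA (x i) (x j) (hx0 i) (hx0 j) hsumij
    linarith [e1c, e2c, e3c, dtc, hQ, hA, hfic.ge, hfic.le]
  · push_neg at hpairs
    interval_cases n
    · have h01 := hpairs 0 1 (by decide)
      rw [Fin.sum_univ_two] at hsum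
      norm_num at hsum
      linarith
    · have h01 := hpairs 0 1 (by decide)
      have h02 := hpairs 0 2 (by decide)
      have h12 := hpairs 1 2 (by decide)
      rw [Fin.sum_univ_three] at hsum
      norm_num at hsum
      linarith
    · -- n = 4
      have hcard : (Finset.univ : Finset (Fin 4)).card = 4 := by simp
      have hR := lemR (Finset.univ : Finset (Fin 4)) x (π/2) le_rfl (by linarith)
        (fun i _ => hxpi i) (fun i _ j _ hij => hpairs i j hij) (by rw [hcard]; norm_num)
        (by rw [hcard, hsum]; push_cast; ring)
      rw [hcard, Real.cos_pi_div_two] at hR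
      have e : (((4:ℕ):ℝ) - 2) * π / (((4:ℕ):ℝ) - 1) = π - π/3 := by push_cast; ring
      rw [e, Real.cos_pi_sub, Real.cos_pi_div_three]
      push_cast at hR ⊢
      linarith
    · -- n = 5
      have hcard : (Finset.univ : Finset (Fin 5)).card = 5 := by simp
      have hR := lemR (Finset.univ : Finset (Fin 5)) x (3*π/5) (by linarith) (by linarith)
        (fun i _ => hxpi i) (fun i _ j _ hij => hpairs i j hij) (by rw [hcard]; norm_num)
        (by rw [hcard, hsum]; push_cast; ring)
      rw [hcard] at hR
      have hc25 : Real.cos (2*π/5) = (Real.sqrt 5 - 1)/4 := by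
        have h := Real.cos_two_mul (π/5)
        rw [Real.cos_pi_div_five] at h
        rw [show 2*π/5 = 2*(π/5) by ring, h]
        have h5 : Real.sqrt 5 ^ 2 = 5 := Real.sq_sqrt (by norm_num)
        linear_combination h5 / 8
      have e35 : 3*π/5 = π - 2*π/5 := by ring
      rw [e35, Real.cos_pi_sub, hc25] at hR
      have e : (((5:ℕ):ℝ) - 2) * π / (((5:ℕ):ℝ) - 1) = π - π/4 := by push_cast; ring
      rw [e, Real.cos_pi_sub, Real.cos_pi_div_four]
      have s2 : Real.sqrt 2 ≥ 1.414 := by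
        nlinarith [Real.sq_sqrt (by norm_num : (0:ℝ) ≤ 2), Real.sqrt_nonneg 2]
      have s5 : Real.sqrt 5 ≤ 2.2361 := by
        nlinarith [Real.sq_sqrt (by norm_num : (0:ℝ) ≤ 5), Real.sqrt_nonneg 5]
      push_cast at hR ⊢
      linarith
    · -- n = 6
      have hcard : (Finset.univ : Finset (Fin 6)).card = 6 := by simp
      have hR := lemR (Finset.univ : Finset (Fin 6)) x (2*π/3) (by linarith) (by linarith)
        (fun i _ => hxpi i) (fun i _ j _ hij => hpairs i j hij) (by rw [hcard]; norm_num)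
        (by rw [hcard, hsum]; push_cast; ring)
      rw [hcard] at hR
      have e23 : 2*π/3 = π - π/3 := by ring
      rw [e23, Real.cos_pi_sub, Real.cos_pi_div_three] at hR
      have e : (((6:ℕ):ℝ) - 2) * π / (((6:ℕ):ℝ) - 1) = π - π/5 := by push_cast; ring
      rw [e, Real.cos_pi_sub, Real.cos_pi_div_five]
      have s5 : Real.sqrt 5 ≥ 2.2 := by
        nlinarith [Real.sq_sqrt (by norm_num : (0:ℝ) ≤ 5), Real.sqrt_nonneg 5]
      push_cast at hR ⊢
      linarith
end

section
/- Let n ≥ 7 and let x₁,…,xₙ be real numbers with 0 ≤ xᵢ ≤ π and Σ xᵢ = (n−2)π. Then Σ cos(xᵢ) ≥ n·cos((n−2)π/n). -/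
/-!
Passing to the exterior angles `sᵢ = π - xᵢ`, which lie in `[0, π]` and sum to `2π`, the claim
becomes `∑ cos sᵢ ≤ n cos φ` with `φ = 2π / n`. This is the tangent line trick: the tangent to
`cos` at `φ` lies above `cos` on `[0, π - φ]`, and on all of `[0, π]` as soon as
`sin φ (π - φ) ≤ 1 + cos φ`, which holds for `φ ≤ π / 4`, i.e. `n ≥ 8`. For `n = 7` the only
obstruction is an angle `s₀ > π - 2π/7`; then `cos s₀ ≈ -1`, and bounding the six other cosines by
the tangent at `π / 6` gives a total of at most `3√3 - 1 < 7 cos (2π/7)`.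
-/

open Real Set Finset

namespace Real

variable {a b c m ψ s : ℝ}

lemma cos_sub_cos_le_of_le_sin (hab : a ≤ b) (h : ∀ c ∈ Ioo a b, m ≤ sin c) :
    cos b - cos a ≤ -m * (b - a) :=
  (convex_Icc a b).image_sub_le_mul_sub_of_deriv_le continuous_cos.continuousOn
    differentiable_cos.differentiableOn
    (fun c hc ↦ by rw [interior_Icc] at hc; simpa using h c hc)
    a (left_mem_Icc.2 hab) b (right_mem_Icc.2 hab) hab

lemma neg_mul_sub_le_cos_sub_cos_of_sin_le (hab : a ≤ b) (h : ∀ c ∈ Ioo a b, sin c ≤ m) :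
    -m * (b - a) ≤ cos b - cos a :=
  (convex_Icc a b).mul_sub_le_image_sub_of_le_deriv continuous_cos.continuousOn
    differentiable_cos.differentiableOn
    (fun c hc ↦ by rw [interior_Icc] at hc; simpa using h c hc)
    a (left_mem_Icc.2 hab) b (right_mem_Icc.2 hab) hab

lemma sin_le_sin_of_mem_Icc_pi_sub (hψ : 0 ≤ ψ) (hc : c ∈ Icc ψ (π - ψ)) : sin ψ ≤ sin c := by
  have hψπ : ψ ≤ π := by linarith [hc.1, hc.2]
  have := strictConcaveOn_sin_Icc.concaveOn.min_le_of_mem_Icc ⟨hψ, hψπ⟩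
    ⟨by linarith, by linarith⟩ hc
  rwa [sin_pi_sub, min_self] at this

lemma cos_le_cos_sub_sin_mul_of_le_pi_sub (hψ0 : 0 ≤ ψ) (hψ : ψ ≤ π / 2) (hs0 : 0 ≤ s)
    (hs : s ≤ π - ψ) : cos s ≤ cos ψ - sin ψ * (s - ψ) := by
  rcases le_total s ψ with hsψ | hψs
  · have := neg_mul_sub_le_cos_sub_cos_of_sin_le hsψ fun c hc ↦
      sin_le_sin_of_le_of_le_pi_div_two (by linarith [hc.1]) hψ hc.2.le
    linarith
  · have := cos_sub_cos_le_of_le_sin hψs fun c hc ↦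
      sin_le_sin_of_mem_Icc_pi_sub hψ0 ⟨hc.1.le, by linarith [hc.2]⟩
    linarith

lemma cos_le_cos_sub_sin_mul_of_sin_mul_le (hψ0 : 0 ≤ ψ) (hψ : ψ ≤ π / 2) (hs0 : 0 ≤ s)
    (hs : s ≤ π) (hend : sin ψ * (π - ψ) ≤ 1 + cos ψ) : cos s ≤ cos ψ - sin ψ * (s - ψ) := by
  rcases le_total s (π - ψ) with hsψ | hψs
  · exact cos_le_cos_sub_sin_mul_of_le_pi_sub hψ0 hψ hs0 hsψ
  · have := neg_mul_sub_le_cos_sub_cos_of_sin_le hs fun c hc ↦ by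
      rw [← sin_pi_sub]
      exact sin_le_sin_of_le_of_le_pi_div_two (by linarith [hc.2]) hψ (by linarith [hc.1])
    rw [cos_pi] at this
    nlinarith [sin_nonneg_of_nonneg_of_le_pi hψ0 (by linarith : ψ ≤ π)]

lemma sin_mul_pi_sub_le_one_add_cos (hψ0 : 0 ≤ ψ) (hψ : ψ ≤ π / 4) :
    sin ψ * (π - ψ) ≤ 1 + cos ψ := by
  -- with `ψ = 2a` the claim reads `2 cos a (sin a (π - 2a) - cos a) ≤ 0`
  obtain ⟨a, rfl⟩ : ∃ a, ψ = 2 * a := ⟨ψ / 2, by ring⟩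
  have hπ := pi_lt_d2
  have ha0 : 0 ≤ a := by linarith
  have ha1 : a ≤ 0.39375 := by linarith
  have hsin : sin a ≤ a - a ^ 3 / 7 := by
    have := sin_bound (x := a) (by rw [abs_of_nonneg ha0]; linarith)
    rw [abs_of_nonneg ha0] at this
    nlinarith [(abs_le.1 this).2,
      mul_nonneg (pow_nonneg ha0 3) (by nlinarith : (0 : ℝ) ≤ 1 / 42 - a ^ 2 / 100)]
  have hcos0 : 0 ≤ cos a := cos_nonneg_of_neg_pi_div_two_le_of_le (by linarith) (by linarith)
  have hhalf : sin a * (π - 2 * a) ≤ cos a := calc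
    sin a * (π - 2 * a) ≤ (a - a ^ 3 / 7) * (3.15 - 2 * a) := by
      have : 0 ≤ a - a ^ 3 / 7 := by nlinarith [mul_nonneg ha0 ha0]
      nlinarith
    _ ≤ 1 - a ^ 2 / 2 := by
      nlinarith [mul_nonneg ha0 (sub_nonneg.2 ha1),
        mul_nonneg (mul_nonneg ha0 ha0) (sub_nonneg.2 ha1),
        mul_nonneg (mul_nonneg ha0 ha0) (mul_nonneg ha0 (sub_nonneg.2 ha1))]
    _ ≤ cos a := one_sub_sq_div_two_le_cos
  rw [sin_two_mul, cos_two_mul]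
  nlinarith

lemma three_mul_sqrt_three_sub_one_le_seven_mul_cos : 3 * √3 - 1 ≤ 7 * cos (2 * π / 7) := by
  have hπ := pi_gt_d2
  have hπ' := pi_lt_d2
  have hsplit : 2 * π / 7 = π / 3 - π / 21 := by ring
  rw [hsplit, cos_sub, cos_pi_div_three, sin_pi_div_three]
  have hcos := one_sub_sq_div_two_le_cos (x := π / 21)
  have hsin := sin_ge_sub_cube (x := π / 21) (by positivity)
  have h3 : √3 < 1.75 := by rw [sqrt_lt' (by norm_num)]; norm_num
  have hy : (0.1489 : ℝ) ≤ π / 21 - (π / 21) ^ 3 / 6 := by nlinarith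
  have : 0.1489 * √3 ≤ √3 * sin (π / 21) := by nlinarith [sqrt_nonneg 3]
  nlinarith

end Real

namespace Finset

lemma sum_le_card_mul_sub_mul_sum_sub {ι : Type*} (t : Finset ι) {g s : ι → ℝ} {c k ψ : ℝ}
    (h : ∀ i ∈ t, g i ≤ c - k * (s i - ψ)) :
    ∑ i ∈ t, g i ≤ #t * c - k * (∑ i ∈ t, s i - #t * ψ) := calc
  ∑ i ∈ t, g i ≤ ∑ i ∈ t, (c - k * (s i - ψ)) := sum_le_sum h
  _ = #t * c - k * (∑ i ∈ t, s i - #t * ψ) := by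
    simp only [sum_sub_distrib, ← mul_sum, sum_const, nsmul_eq_mul]

end Finset

variable {ι : Type*} [Fintype ι] {s : ι → ℝ}

lemma sum_cos_le_three_mul_sqrt_three_sub_one (hcard : Fintype.card ι = 7) (hs0 : ∀ i, 0 ≤ s i)
    (hsπ : ∀ i, s i ≤ π) (hsum : ∑ i, s i = 2 * π) {i₀ : ι} (hi₀ : π - 1 ≤ s i₀) :
    ∑ i, cos (s i) ≤ 3 * √3 - 1 := by
  classical
  have hπ := pi_gt_three
  have hrest : ∑ i ∈ univ.erase i₀, cos (s i) ≤
      6 * (√3 / 2) - 1 / 2 * (∑ i ∈ univ.erase i₀, s i - 6 * (π / 6)) := by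
    have := sum_le_card_mul_sub_mul_sum_sub (univ.erase i₀) (g := fun i ↦ cos (s i)) fun i _ ↦
      cos_le_cos_sub_sin_mul_of_sin_mul_le (ψ := π / 6) (by positivity) (by linarith) (hs0 i)
        (hsπ i) (sin_mul_pi_sub_le_one_add_cos (by positivity) (by linarith))
    rwa [card_erase_of_mem (mem_univ i₀), card_univ, hcard, cos_pi_div_six, sin_pi_div_six]
      at this
  have hfirst : cos (s i₀) ≤ -1 + (π - s i₀) ^ 2 / 2 := by
    have := one_sub_sq_div_two_le_cos (x := π - s i₀)
    rw [cos_pi_sub] at this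
    linarith
  rw [← add_sum_erase univ s (mem_univ i₀)] at hsum
  rw [← add_sum_erase univ _ (mem_univ i₀)]
  nlinarith [hsπ i₀]

theorem sum_cos_le_card_mul_cos_two_pi_div (hcard : 7 ≤ Fintype.card ι) (hs0 : ∀ i, 0 ≤ s i)
    (hsπ : ∀ i, s i ≤ π) (hsum : ∑ i, s i = 2 * π) :
    ∑ i, cos (s i) ≤ Fintype.card ι * cos (2 * π / Fintype.card ι) := by
  have hn : (7 : ℝ) ≤ Fintype.card ι := by exact_mod_cast hcard
  set φ := 2 * π / Fintype.card ι with hφ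
  have hφ0 : 0 ≤ φ := by positivity
  have hφ7 : φ ≤ 2 * π / 7 := div_le_div_of_nonneg_left (by positivity) (by norm_num) hn
  have hπ := pi_lt_d2
  by_cases htangent : ∀ i, cos (s i) ≤ cos φ - sin φ * (s i - φ)
  · have := sum_le_card_mul_sub_mul_sum_sub univ fun i _ ↦ htangent i
    rwa [card_univ, hsum, hφ, mul_div_cancel₀ _ (by positivity), sub_self, mul_zero,
      sub_zero] at this
  push Not at htangent
  obtain ⟨i₀, hi₀⟩ := htangent
  have hn7 : Fintype.card ι = 7 := by
    by_contra hne
    have hn8 : (8 : ℝ) ≤ Fintype.card ι := by exact_mod_cast (show 8 ≤ Fintype.card ι by omega)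
    have hφ8 : φ ≤ π / 4 := by
      rw [hφ, div_le_div_iff₀ (by positivity) (by norm_num)]; nlinarith [pi_pos]
    exact hi₀.not_ge <| cos_le_cos_sub_sin_mul_of_sin_mul_le hφ0 (by linarith) (hs0 i₀)
      (hsπ i₀) (sin_mul_pi_sub_le_one_add_cos hφ0 hφ8)
  have hbad : π - φ < s i₀ := by
    by_contra! hle
    exact hi₀.not_ge <| cos_le_cos_sub_sin_mul_of_le_pi_sub hφ0 (by linarith) (hs0 i₀) hle
  rw [hφ, hn7]
  push_cast
  linarith [sum_cos_le_three_mul_sqrt_three_sub_one hn7 hs0 hsπ hsum (i₀ := i₀) (by linarith),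
    three_mul_sqrt_three_sub_one_le_seven_mul_cos]

theorem polygon_cos_sum_bound_large (n : ℕ) (hn : 7 ≤ n) (x : Fin n → ℝ)
    (hx0 : ∀ i, 0 ≤ x i) (hxpi : ∀ i, x i ≤ Real.pi)
    (hsum : ∑ i, x i = (n - 2) * Real.pi) :
    ∑ i, Real.cos (x i) ≥ n * Real.cos ((n - 2) * Real.pi / n) := by
  have hn0 : (n : ℝ) ≠ 0 := by positivity
  have hsupp := sum_cos_le_card_mul_cos_two_pi_div (s := fun i ↦ π - x i) (by simpa using hn)
    (fun i ↦ by linarith [hxpi i]) (fun i ↦ by linarith [hx0 i])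
    (by simp only [sum_sub_distrib, hsum, sum_const, card_univ, Fintype.card_fin, nsmul_eq_mul]
        ring)
  have hangle : ((n : ℝ) - 2) * π / n = π - 2 * π / n := by field_simp
  simp only [Fintype.card_fin, cos_pi_sub, sum_neg_distrib] at hsupp
  rw [hangle, cos_pi_sub]
  linarith
end

section
/- For every integer n ≥ 2, we have 1 + (n−1)·cos((n−2)π/(n−1)) ≤ −(n−4), i.e., the configuration with one zero angle gives a sum of cosines at most that of the configuration with two zero angles. -/
theorem one_zero_le_two_zero (n : ℤ) (hn : 2 ≤ n) :
    1 + ((n : ℝ) - 1) * Real.cos (((n : ℝ) - 2) * Real.pi / ((n : ℝ) - 1)) ≤ -((n : ℝ) - 4) := by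
  rcases eq_or_lt_of_le hn with h2 | h2
  · subst_vars; norm_num
  rcases eq_or_lt_of_le (by omega : (3:ℤ) ≤ n) with h3 | h3
  · rw [← h3]; norm_num [Real.cos_pi_div_two]
  have hn4 : (4:ℝ) ≤ (n:ℝ) := by exact_mod_cast (by omega : (4:ℤ) ≤ n)
  have hne : (n:ℝ) - 1 ≠ 0 := by linarith
  have hpos : (0:ℝ) < (n:ℝ) - 1 := by linarith
  have harg : ((n : ℝ) - 2) * Real.pi / ((n : ℝ) - 1) = Real.pi - Real.pi / ((n:ℝ) - 1) := by
    field_simp; ring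
  rw [harg, Real.cos_pi_sub]
  have hb := Real.one_sub_sq_div_two_le_cos (x := Real.pi / ((n:ℝ) - 1))
  have hpi : Real.pi < 3.15 := Real.pi_lt_d2
  have hpi0 : 0 < Real.pi := Real.pi_pos
  have key : (n:ℝ) - 3 ≤ ((n:ℝ) - 1) * Real.cos (Real.pi / ((n:ℝ) - 1)) := by
    have h1 : ((n:ℝ) - 1) * (1 - (Real.pi / ((n:ℝ) - 1)) ^ 2 / 2) ≤
        ((n:ℝ) - 1) * Real.cos (Real.pi / ((n:ℝ) - 1)) := by gcongr
    have key2 : ((n:ℝ)-1) * ((Real.pi/((n:ℝ)-1))^2/2) ≤ 2 := by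
      rw [div_pow, div_div, mul_div_assoc',
        div_le_iff₀ (by positivity : (0:ℝ) < ((n:ℝ)-1)^2*2)]
      have hpi2 : Real.pi ^ 2 ≤ 10 := by nlinarith
      have h10 : ((n:ℝ)-1) * Real.pi ^ 2 ≤ ((n:ℝ)-1) * 10 :=
        mul_le_mul_of_nonneg_left hpi2 (le_of_lt hpos)
      nlinarith [sq_nonneg ((n:ℝ)-3)]
    have h2 : (n:ℝ) - 3 ≤ ((n:ℝ) - 1) * (1 - (Real.pi / ((n:ℝ) - 1)) ^ 2 / 2) := by
      rw [mul_sub, mul_one]; linarith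
    linarith
  nlinarith
end

section
/- Define h(n) = n·cos(2π/n) − (n−1)·cos(π/(n−1)) + 1 for real n. Then h(n) ≤ 0 for integer 2 ≤ n ≤ 6 and h(n) > 0 for all integers n ≥ 7. -/
/-!
Halving the angles turns `h` (here `cosGap`) into
`2 * (1 + (x - 1) * sin² (π / (2 (x - 1))) - x * sin² (π / x))`.
Bounding `sin u` from both sides by its cubic Taylor polynomial, `h x / 2` is at least
`1 - π² (3x - 4) / (4x (x - 1))` plus a positive quartic correction, and
`π² (3x - 4) < 4x (x - 1)` holds from `x = 7` on (narrowly at `x = 7`: `17 π² < 168`).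
For `2 ≤ n ≤ 6` the exact values of `cos (π / k)` for `k ≤ 5` settle the sign.
-/

open Real

noncomputable def cosGap (x : ℝ) : ℝ :=
  x * cos (2 * π / x) - (x - 1) * cos (π / (x - 1)) + 1

theorem cosGap_eq_sin_sq (x : ℝ) :
    cosGap x = 2 * (1 + (x - 1) * sin (π / (2 * (x - 1))) ^ 2 - x * sin (π / x) ^ 2) := by
  have hu : 2 * π / x = 2 * (π / x) := mul_div_assoc _ _ _
  have hv : π / (x - 1) = 2 * (π / (2 * (x - 1))) := by
    rw [← mul_div_assoc, mul_div_mul_left _ _ two_ne_zero]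
  rw [cosGap, hu, hv, cos_two_mul_eq_one_sub, cos_two_mul_eq_one_sub]
  ring

theorem Real.sin_sq_le_sq_sub_pow_four_div_eight {u : ℝ} (hu₀ : 0 ≤ u) (hu₁ : u ≤ 1) :
    sin u ^ 2 ≤ u ^ 2 - u ^ 4 / 8 := by
  have hsin : sin u ≤ u - u ^ 3 / 8 := by
    have := (abs_le.mp (sin_bound (abs_le.mpr ⟨by linarith, hu₁⟩))).2
    rw [abs_of_nonneg hu₀] at this
    nlinarith [pow_le_pow_of_le_one hu₀ hu₁ (show 3 ≤ 5 by norm_num), pow_nonneg hu₀ 3]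
  have hsin₀ : 0 ≤ sin u := sin_nonneg_of_nonneg_of_le_pi hu₀ (by linarith [pi_gt_three])
  nlinarith [pow_le_pow_left₀ hsin₀ hsin 2,
    pow_le_pow_of_le_one hu₀ hu₁ (show 4 ≤ 6 by norm_num)]

theorem Real.sq_sub_pow_four_div_three_le_sin_sq {v : ℝ} (hv₀ : 0 ≤ v) (hv : v ^ 2 ≤ 6) :
    v ^ 2 - v ^ 4 / 3 ≤ sin v ^ 2 := by
  have hsin := sin_ge_sub_cube hv₀
  have hcube : 0 ≤ v - v ^ 3 / 6 := by nlinarith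
  nlinarith [pow_nonneg hv₀ 6, pow_le_pow_left₀ hcube hsin 2]

theorem cosGap_pos {x : ℝ} (hx : 7 ≤ x) : 0 < cosGap x := by
  have hx₀ : 0 < x := by linarith
  have hm₀ : 0 < x - 1 := by linarith
  have hπ := pi_lt_d4
  have hπ₀ := pi_pos
  have hupper : x * sin (π / x) ^ 2 ≤ π ^ 2 / x - π ^ 4 / (8 * x ^ 3) := by
    have hu : π / x ≤ 1 := (div_le_one hx₀).mpr (by linarith)
    calc x * sin (π / x) ^ 2 ≤ x * ((π / x) ^ 2 - (π / x) ^ 4 / 8) :=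
          mul_le_mul_of_nonneg_left
            (sin_sq_le_sq_sub_pow_four_div_eight (by positivity) hu) hx₀.le
      _ = π ^ 2 / x - π ^ 4 / (8 * x ^ 3) := by field_simp
  have hlower : π ^ 2 / (4 * (x - 1)) - π ^ 4 / (48 * (x - 1) ^ 3)
      ≤ (x - 1) * sin (π / (2 * (x - 1))) ^ 2 := by
    have hv : (π / (2 * (x - 1))) ^ 2 ≤ 6 := by
      rw [div_pow, div_le_iff₀ (by positivity)]; nlinarith
    calc π ^ 2 / (4 * (x - 1)) - π ^ 4 / (48 * (x - 1) ^ 3)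
        = (x - 1) * ((π / (2 * (x - 1))) ^ 2 - (π / (2 * (x - 1))) ^ 4 / 3) := by
          field_simp; ring
      _ ≤ (x - 1) * sin (π / (2 * (x - 1))) ^ 2 :=
          mul_le_mul_of_nonneg_left
            (sq_sub_pow_four_div_three_le_sin_sq (by positivity) hv) hm₀.le
  have hquartic : π ^ 4 / (48 * (x - 1) ^ 3) ≤ π ^ 4 / (8 * x ^ 3) :=
    div_le_div_of_nonneg_left (by positivity) (by positivity)
      (by nlinarith [mul_nonneg (sub_nonneg.2 hx) (sq_nonneg (x - 1))])
  have hquadratic : π ^ 2 / x - π ^ 2 / (4 * (x - 1)) < 1 := by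
    have hπsq : π ^ 2 < 9.87 := by nlinarith
    rw [div_sub_div _ _ hx₀.ne' (by positivity), div_lt_one (by positivity)]
    nlinarith [mul_lt_mul_of_pos_right hπsq (show 0 < 3 * x - 4 by linarith),
      mul_nonneg (sub_nonneg.2 hx) (show 0 ≤ 4 * x - 5.61 by linarith)]
  rw [cosGap_eq_sin_sq]
  linarith

theorem cosGap_two : cosGap 2 = 0 := by
  norm_num [cosGap, mul_div_cancel_left₀]

theorem cosGap_three : cosGap 3 = -1 / 2 := by
  rw [cosGap, show 2 * π / 3 = π - π / 3 by ring, show (3 : ℝ) - 1 = 2 by norm_num,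
    cos_pi_sub, cos_pi_div_three, cos_pi_div_two]
  norm_num

theorem cosGap_four : cosGap 4 = -1 / 2 := by
  rw [cosGap, show 2 * π / 4 = π / 2 by ring, show (4 : ℝ) - 1 = 3 by norm_num,
    cos_pi_div_two, cos_pi_div_three]
  norm_num

theorem cosGap_five : cosGap 5 = (5 * √5 - 1) / 4 - 2 * √2 := by
  rw [cosGap, show 2 * π / 5 = 2 * (π / 5) by ring, show (5 : ℝ) - 1 = 4 by norm_num,
    cos_two_mul, cos_pi_div_five, cos_pi_div_four]
  nlinarith [sq_sqrt (show (0 : ℝ) ≤ 5 by norm_num)]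

theorem cosGap_six : cosGap 6 = (11 - 5 * √5) / 4 := by
  rw [cosGap, show 2 * π / 6 = π / 3 by ring, show (6 : ℝ) - 1 = 5 by norm_num,
    cos_pi_div_three, cos_pi_div_five]
  ring

theorem cosGap_nonpos {n : ℤ} (h₂ : 2 ≤ n) (h₆ : n ≤ 6) : cosGap n ≤ 0 := by
  have h5 := sq_sqrt (show (0 : ℝ) ≤ 5 by norm_num)
  have h2 := sq_sqrt (show (0 : ℝ) ≤ 2 by norm_num)
  interval_cases n <;> push_cast
  · rw [cosGap_two]
  · rw [cosGap_three]; norm_num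
  · rw [cosGap_four]; norm_num
  · rw [cosGap_five]; nlinarith [sqrt_nonneg 5, sqrt_nonneg 2]
  · rw [cosGap_six]; nlinarith [sqrt_nonneg 5]

theorem h_sign (n : ℤ) :
    (2 ≤ n → n ≤ 6 →
      (n : ℝ) * Real.cos (2 * Real.pi / (n : ℝ)) - ((n : ℝ) - 1) * Real.cos (Real.pi / ((n : ℝ) - 1)) + 1 ≤ 0) ∧
    (7 ≤ n →
      (n : ℝ) * Real.cos (2 * Real.pi / (n : ℝ)) - ((n : ℝ) - 1) * Real.cos (Real.pi / ((n : ℝ) - 1)) + 1 > 0) :=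
  ⟨cosGap_nonpos, fun h₇ => cosGap_pos (by exact_mod_cast h₇)⟩
end

section
/- For real n ≥ 4, the function h(n) = n·cos(2π/n) − (n−1)·cos(π/(n−1)) + 1 is monotone nondecreasing, since h'(n) = e(2π/n) − e(π/(n−1)) ≥ 0 where e(x) = cos(x) + x·sin(x). -/
/-! With `e x = cos x + x sin x`, the derivative of `m ↦ m cos (c / m)` is `e (c / m)`,
so `h' n = e (2π/n) - e (π/(n-1))`. Since `e' x = x cos x ≥ 0` on `[0, π/2]`, `e` is
monotone there, and for `n ≥ 4` both arguments lie in `[0, π/2]` with `π/(n-1) ≤ 2π/n`. -/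

open Real Set

lemma monotoneOn_Ici_of_hasDerivAt_nonneg {f f' : ℝ → ℝ} {a : ℝ}
    (hf : ∀ x ∈ Ici a, HasDerivAt f (f' x) x) (hf' : ∀ x ∈ Ioi a, 0 ≤ f' x) :
    MonotoneOn f (Ici a) := by
  refine monotoneOn_of_hasDerivWithinAt_nonneg (f' := f') (convex_Ici a)
    (HasDerivAt.continuousOn hf) (fun x hx => ?_) (fun x hx => ?_) <;> rw [interior_Ici] at hx
  exacts [(hf x (mem_Ici_of_Ioi hx)).hasDerivWithinAt, hf' x hx]

lemma hasDerivAt_cos_add_mul_sin (x : ℝ) :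
    HasDerivAt (fun y => cos y + y * sin y) (x * cos x) x :=
  ((hasDerivAt_cos x).add ((hasDerivAt_id' x).mul (hasDerivAt_sin x))).congr_deriv (by ring)

lemma monotoneOn_cos_add_mul_sin : MonotoneOn (fun y => cos y + y * sin y) (Icc 0 (π / 2)) := by
  refine monotoneOn_of_hasDerivWithinAt_nonneg (convex_Icc _ _)
    (HasDerivAt.continuousOn fun x _ => hasDerivAt_cos_add_mul_sin x)
    (fun x _ => (hasDerivAt_cos_add_mul_sin x).hasDerivWithinAt) fun x hx => ?_
  rw [interior_Icc] at hx
  exact mul_nonneg hx.1.le (cos_nonneg_of_mem_Icc ⟨by linarith [hx.1, pi_pos], hx.2.le⟩)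

lemma hasDerivAt_mul_cos_div (c : ℝ) {m : ℝ} (hm : m ≠ 0) :
    HasDerivAt (fun m => m * cos (c / m)) (cos (c / m) + c / m * sin (c / m)) m := by
  have hdiv : HasDerivAt (fun m => c / m) (-c / m ^ 2) m := by
    simpa using (hasDerivAt_const m c).fun_div (hasDerivAt_id' m) hm
  refine ((hasDerivAt_id' m).mul hdiv.cos).congr_deriv ?_
  field_simp

lemma hasDerivAt_mul_cos_two_pi_div_sub {n : ℝ} (h₀ : n ≠ 0) (h₁ : n - 1 ≠ 0) :
    HasDerivAt (fun m => m * cos (2 * π / m) - (m - 1) * cos (π / (m - 1)) + 1)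
      (cos (2 * π / n) + 2 * π / n * sin (2 * π / n)
        - (cos (π / (n - 1)) + π / (n - 1) * sin (π / (n - 1)))) n :=
  ((hasDerivAt_mul_cos_div (2 * π) h₀).sub
    ((hasDerivAt_mul_cos_div π h₁).comp_sub_const n 1)).add_const 1

lemma pi_div_sub_one_le_two_mul_pi_div {n : ℝ} (hn : 2 ≤ n) : π / (n - 1) ≤ 2 * π / n := by
  rw [div_le_div_iff₀ (by linarith) (by linarith)]
  nlinarith [pi_pos]

lemma two_mul_pi_div_le_pi_div_two {n : ℝ} (hn : 4 ≤ n) : 2 * π / n ≤ π / 2 := by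
  rw [div_le_div_iff₀ (by linarith) two_pos]
  nlinarith [pi_pos]

theorem h_monotone_on_Ici_four :
    (∀ n : ℝ, 4 ≤ n →
      HasDerivAt (fun m : ℝ => m * Real.cos (2 * Real.pi / m)
          - (m - 1) * Real.cos (Real.pi / (m - 1)) + 1)
        ((Real.cos (2 * Real.pi / n) + (2 * Real.pi / n) * Real.sin (2 * Real.pi / n))
          - (Real.cos (Real.pi / (n - 1)) + (Real.pi / (n - 1)) * Real.sin (Real.pi / (n - 1)))) n) ∧
    MonotoneOn (fun m : ℝ => m * Real.cos (2 * Real.pi / m)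
        - (m - 1) * Real.cos (Real.pi / (m - 1)) + 1) (Set.Ici (4 : ℝ)) := by
  have hderiv (n : ℝ) (hn : 4 ≤ n) :=
    hasDerivAt_mul_cos_two_pi_div_sub (n := n) (by linarith) (by linarith)
  refine ⟨hderiv, monotoneOn_Ici_of_hasDerivAt_nonneg hderiv fun n (hn : 4 < n) => ?_⟩
  have hle := pi_div_sub_one_le_two_mul_pi_div (n := n) (by linarith)
  have hbound := two_mul_pi_div_le_pi_div_two hn.le
  have hpos : 0 ≤ π / (n - 1) := div_nonneg pi_pos.le (by linarith)
  exact sub_nonneg.mpr <|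
    monotoneOn_cos_add_mul_sin ⟨hpos, hle.trans hbound⟩ ⟨hpos.trans hle, hbound⟩ hle
end

section
/- Averaging process convergence: Let k ≥ 1 and let (x^{(i)}) be a sequence of k-tuples of reals such that x^{(i+1)} is obtained from x^{(i)} by replacing the minimum entry and the maximum entry by their common average (other entries unchanged). Let m be the (invariant) mean of the entries and E_i = Σ_l (x_l^{(i)} − m)². Then E_{i+1} ≤ (1 − 1/(2k))·E_i, and consequently E_i → 0, i.e., all entries converge to the mean. -/
theorem averaging_process_converges (k : ℕ) (hk : 1 ≤ k)
    (x : ℕ → Fin k → ℝ)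
    (hstep : ∀ i, ∃ p q : Fin k,
      (∀ l, x i p ≤ x i l) ∧ (∀ l, x i l ≤ x i q) ∧
      x (i + 1) p = (x i p + x i q) / 2 ∧ x (i + 1) q = (x i p + x i q) / 2 ∧
      ∀ l, l ≠ p → l ≠ q → x (i + 1) l = x i l)
    (m : ℝ) (hm : m = (∑ l, x 0 l) / k) :
    (∀ i, ∑ l, (x (i + 1) l - m) ^ 2 ≤ (1 - 1 / (2 * (k : ℝ))) * ∑ l, (x i l - m) ^ 2) ∧
    Filter.Tendsto (fun i => ∑ l, (x i l - m) ^ 2) Filter.atTop (nhds 0) ∧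
    ∀ l, Filter.Tendsto (fun i => x i l) Filter.atTop (nhds m) := by
  have hk0 : (0:ℝ) < k := by exact_mod_cast Nat.lt_of_lt_of_le Nat.zero_lt_one hk
  -- sum invariance
  have hsum : ∀ i, ∑ l, x i l = ∑ l, x 0 l := by
    intro i
    induction i with
    | zero => rfl
    | succ n ih =>
      obtain ⟨p, q, hpmin, hqmax, hp, hq, hrest⟩ := hstep n
      rw [← ih]
      by_cases hpq : p = q
      · subst hpq
        apply Finset.sum_congr rfl
        intro l _
        by_cases hl : l = p
        · subst hl; rw [hp]; ring
        · exact hrest l hl hl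
      · have h0 : ∑ l, (x (n+1) l - x n l) = 0 := by
          rw [← Finset.sum_subset (Finset.subset_univ ({p, q} : Finset (Fin k)))]
          · rw [Finset.sum_pair hpq, hp, hq]
            ring
          · intro l _ hl
            simp only [Finset.mem_insert, Finset.mem_singleton, not_or] at hl
            rw [hrest l hl.1 hl.2]; ring
        rw [Finset.sum_sub_distrib] at h0
        linarith
  have hmean : ∀ i, ∑ l, x i l = (k:ℝ) * m := by
    intro i
    rw [hsum i, hm]
    field_simp
  -- part 1
  have part1 : ∀ i, ∑ l, (x (i + 1) l - m) ^ 2 ≤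
      (1 - 1 / (2 * (k : ℝ))) * ∑ l, (x i l - m) ^ 2 := by
    intro i
    obtain ⟨p, q, hpmin, hqmax, hp, hq, hrest⟩ := hstep i
    -- min ≤ mean ≤ max
    have hconst : ∀ c : ℝ, ∑ _l : Fin k, c = (k:ℝ) * c := by
      intro c
      simp [Finset.sum_const, Finset.card_univ, mul_comm]
    have hpm : x i p ≤ m := by
      have h1 : (k:ℝ) * x i p ≤ (k:ℝ) * m := by
        rw [← hconst, ← hmean i]
        exact Finset.sum_le_sum fun l _ => hpmin l
      exact le_of_mul_le_mul_left h1 hk0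
    have hqm : m ≤ x i q := by
      have h1 : (k:ℝ) * m ≤ (k:ℝ) * x i q := by
        rw [← hmean i, ← hconst]
        exact Finset.sum_le_sum fun l _ => hqmax l
      exact le_of_mul_le_mul_left h1 hk0
    by_cases hpq : p = q
    · -- all entries equal, both sides zero
      subst hpq
      have hall : ∀ l, x i l = m := by
        intro l
        have h1 : x i l = x i p := le_antisymm (hqmax l) (hpmin l)
        have h2 : x i p = m := le_antisymm hpm hqm
        rw [h1, h2]
      have hall' : ∀ l, x (i+1) l = x i l := by
        intro l
        by_cases hl : l = p
        · subst hl; rw [hp]; ring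
        · exact hrest l hl hl
      have hz : ∑ l, (x i l - m) ^ 2 = 0 := by
        apply Finset.sum_eq_zero
        intro l _
        rw [hall l]; ring
      have hz' : ∑ l, (x (i+1) l - m) ^ 2 = 0 := by
        apply Finset.sum_eq_zero
        intro l _
        rw [hall' l, hall l]; ring
      rw [hz, hz', mul_zero]
    · -- E_{i+1} = E_i - (x_q - x_p)^2/2
      have hdiff : ∑ l, ((x (i+1) l - m) ^ 2 - (x i l - m) ^ 2)
          = -((x i q - x i p) ^ 2 / 2) := by
        rw [← Finset.sum_subset (Finset.subset_univ ({p, q} : Finset (Fin k)))]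
        · rw [Finset.sum_pair hpq, hp, hq]
          ring
        · intro l _ hl
          simp only [Finset.mem_insert, Finset.mem_singleton, not_or] at hl
          rw [hrest l hl.1 hl.2]; ring
      rw [Finset.sum_sub_distrib] at hdiff
      -- E_i ≤ k * (x_q - x_p)^2
      have hbound : ∑ l, (x i l - m) ^ 2 ≤ (k:ℝ) * (x i q - x i p) ^ 2 := by
        rw [← hconst]
        apply Finset.sum_le_sum
        intro l _
        have h1 : x i p ≤ x i l := hpmin l
        have h2 : x i l ≤ x i q := hqmax l
        have habs : |x i l - m| ≤ x i q - x i p := by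
          rw [abs_le]; constructor <;> linarith
        calc (x i l - m) ^ 2 = |x i l - m| ^ 2 := (sq_abs _).symm
          _ ≤ (x i q - x i p) ^ 2 := by
              apply pow_le_pow_left₀ (abs_nonneg _) habs
      have hkne : (k:ℝ) ≠ 0 := ne_of_gt hk0
      have key : (1 - 1 / (2 * (k:ℝ))) * ∑ l, (x i l - m) ^ 2
          = ∑ l, (x i l - m) ^ 2 - (∑ l, (x i l - m) ^ 2) / (2 * k) := by
        field_simp
      rw [key]
      have hdivle : (∑ l, (x i l - m) ^ 2) / (2 * (k:ℝ)) ≤ (x i q - x i p) ^ 2 / 2 := by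
        rw [div_le_div_iff₀ (by positivity) (by norm_num)]
        nlinarith [hbound]
      linarith
  refine ⟨part1, ?_, ?_⟩
  · -- geometric decay to 0
    set E := fun i => ∑ l, (x i l - m) ^ 2 with hE
    have hEnonneg : ∀ i, 0 ≤ E i := fun i =>
      Finset.sum_nonneg fun l _ => sq_nonneg _
    set r : ℝ := 1 - 1 / (2 * (k:ℝ)) with hr
    have hr0 : 0 ≤ r := by
      have : 1 / (2 * (k:ℝ)) ≤ 1 / 2 := by
        apply div_le_div_of_nonneg_left (by norm_num) (by norm_num)
        have : (1:ℝ) ≤ k := by exact_mod_cast hk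
        linarith
      simp only [hr]; linarith
    have hr1 : r < 1 := by
      have : 0 < 1 / (2 * (k:ℝ)) := by positivity
      simp only [hr]; linarith
    have hgeo : ∀ i, E i ≤ E 0 * r ^ i := by
      intro i
      induction i with
      | zero => simp
      | succ n ih =>
        calc E (n+1) ≤ r * E n := part1 n
          _ ≤ r * (E 0 * r ^ n) := by
              apply mul_le_mul_of_nonneg_left ih hr0
          _ = E 0 * r ^ (n+1) := by ring
    have htend : Filter.Tendsto (fun i => E 0 * r ^ i) Filter.atTop (nhds 0) := by
      rw [show (0:ℝ) = E 0 * 0 by ring]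
      exact Filter.Tendsto.const_mul _ (tendsto_pow_atTop_nhds_zero_of_lt_one hr0 hr1)
    exact squeeze_zero hEnonneg hgeo htend
  · intro l
    have hsq : Filter.Tendsto (fun i => (x i l - m) ^ 2) Filter.atTop (nhds 0) := by
      apply squeeze_zero (fun i => sq_nonneg _)
        (g := fun i => ∑ j, (x i j - m) ^ 2)
      · intro i
        exact Finset.single_le_sum (fun j _ => sq_nonneg (x i j - m)) (Finset.mem_univ l)
      · -- reuse the previous tendsto
        set E := fun i => ∑ j, (x i j - m) ^ 2 with hE
        have hEnonneg : ∀ i, 0 ≤ E i := fun i =>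
          Finset.sum_nonneg fun j _ => sq_nonneg _
        set r : ℝ := 1 - 1 / (2 * (k:ℝ)) with hr
        have hr0 : 0 ≤ r := by
          have : 1 / (2 * (k:ℝ)) ≤ 1 / 2 := by
            apply div_le_div_of_nonneg_left (by norm_num) (by norm_num)
            have : (1:ℝ) ≤ k := by exact_mod_cast hk
            linarith
          simp only [hr]; linarith
        have hr1 : r < 1 := by
          have : 0 < 1 / (2 * (k:ℝ)) := by positivity
          simp only [hr]; linarith
        have hgeo : ∀ i, E i ≤ E 0 * r ^ i := by
          intro i
          induction i with
          | zero => simp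
          | succ n ih =>
            calc E (n+1) ≤ r * E n := part1 n
              _ ≤ r * (E 0 * r ^ n) := by
                  apply mul_le_mul_of_nonneg_left ih hr0
              _ = E 0 * r ^ (n+1) := by ring
        have htend : Filter.Tendsto (fun i => E 0 * r ^ i) Filter.atTop (nhds 0) := by
          rw [show (0:ℝ) = E 0 * 0 by ring]
          exact Filter.Tendsto.const_mul _ (tendsto_pow_atTop_nhds_zero_of_lt_one hr0 hr1)
        exact squeeze_zero hEnonneg hgeo htend
    have habs : Filter.Tendsto (fun i => |x i l - m|) Filter.atTop (nhds 0) := by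
      have := hsq.sqrt
      simp only [Real.sqrt_zero] at this
      convert this using 2 with i
      rw [Real.sqrt_sq_eq_abs]
    have hsub : Filter.Tendsto (fun i => x i l - m) Filter.atTop (nhds 0) :=
      squeeze_zero_norm (fun n => le_of_eq (Real.norm_eq_abs _)) habs
    have := hsub.add_const m
    simpa using this
end
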